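/- arXiv:1403.6788 — 2 statements merged into one kernel-verified Lean document; each statement's English description precedes it below -/
import Mathlib

section
/- Let A be a unital separable C*-algebra with T(A) ≠ ∅, and let Y ⊂ T(A) be closed. Suppose a ∈ M_k(A) is a positive element such that β − α < d_τ(a) ≤ β for all τ ∈ Y, for some real numbers 0 < α < β. Then there exists η > 0 such that k − β ≤ d_τ(1_k − f_η(a)) < k − β + 2α for all τ ∈ Y. -/
open Filter Set Topology MeasureTheory
open scoped ComplexOrder Matrix.Norms.L2Operator

noncomputable section

universe u v

/-- A tracial state on a unital C*-algebra `A`, viewed as an element of the weak-* dual: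
a positive linear functional `τ` with `τ 1 = 1` and `τ (a b) = τ (b a)`. -/
def IsTracialState (A : Type u) [CStarAlgebra A] (τ : WeakDual ℂ A) : Prop :=
  τ 1 = 1 ∧ (∀ a : A, 0 ≤ τ (star a * a)) ∧ ∀ a b : A, τ (a * b) = τ (b * a)

/-- The tracial state space `T(A)`, as a subset of the weak-* dual (so that it carries the
weak-* topology). -/
def TS (A : Type u) [CStarAlgebra A] : Set (WeakDual ℂ A) := {τ | IsTracialState A τ}

/-- `d_φ(a) = sup_{n ≥ 1} φ(f_{1/n}(a))`, where `f_η(t) = min (t/η) 1`, for a (positive)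
linear functional `φ` on a unital C*-algebra `B`. -/
noncomputable def dRank {B : Type v} [CStarAlgebra B] (φ : B → ℂ) (a : B) : ℝ :=
  ⨆ n : ℕ, (φ (cfc (fun t : ℝ => min (((n : ℝ) + 1) * t) 1) a)).re

/-- The matrix algebra `M_k(A)` (as a star `ℂ`-algebra). -/
abbrev Mat (k : ℕ) (A : Type u) : Type u := Matrix (Fin k) (Fin k) A

/-- The unnormalized trace `τ_k((a_ij)) = ∑ i, τ (a_ii)` on `M_k(A)`, transported to a
C*-algebra `B` which realizes `M_k(A)` via a star-algebra isomorphism `e`. -/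
noncomputable def matTr {A : Type u} [CStarAlgebra A] {k : ℕ} {B : Type v} [CStarAlgebra B]
    (τ : WeakDual ℂ A) (e : Mat k A ≃⋆ₐ[ℂ] B) : B → ℂ :=
  fun b => ∑ i, τ (e.symm b i i)

/-- `(a - ε)₊`, via the continuous functional calculus. -/
noncomputable def cutMinus {B : Type v} [CStarAlgebra B] (a : B) (ε : ℝ) : B :=
  cfc (fun t : ℝ => max (t - ε) 0) a

/-- `f_η(a)` where `f_η(t) = min (t/η) 1`, via the continuous functional calculus. -/
noncomputable def fEtaCFC {B : Type v} [CStarAlgebra B] (η : ℝ) (a : B) : B :=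
  cfc (fun t : ℝ => min (t / η) 1) a

/-- `a^{1/2}`, via the continuous functional calculus. -/
noncomputable def sqrtCFC {B : Type v} [CStarAlgebra B] (a : B) : B :=
  cfc (fun t : ℝ => Real.sqrt t) a

/-- Cuntz subequivalence `a ≾ b` in a C*-algebra `B`. -/
def CuntzBelow {B : Type v} [CStarAlgebra B] (a b : B) : Prop :=
  ∃ x : ℕ → B, Tendsto (fun n => ‖x n * b * star (x n) - a‖) atTop (𝓝 0)

/-- The upper-left-corner embedding of `M_k(A)` into `M_m(A)`. -/
def matInc {A : Type u} [Zero A] {k m : ℕ} (M : Mat k A) : Mat m A :=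
  Matrix.of fun i j => if h : (i : ℕ) < k ∧ (j : ℕ) < k then M ⟨i.1, h.1⟩ ⟨j.1, h.2⟩ else 0

/-- Strict comparison of positive elements: for positive `a ∈ M_k(A)`, `b ∈ M_l(A)`,
if `d_τ(a) < d_τ(b)` for every tracial state `τ`, then `a ≾ b` in `M_{max k l}(A)`
(realized as a C*-algebra `B` via a star-algebra isomorphism). -/
def StrictComparison (A : Type u) [CStarAlgebra A] : Prop :=
  ∀ (k l : ℕ) (B : Type u) (_ : CStarAlgebra B) (_ : PartialOrder B) (_ : StarOrderedRing B)
    (e : Mat (max k l) A ≃⋆ₐ[ℂ] B) (a : Mat k A) (b : Mat l A),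
    0 ≤ e (matInc a) → 0 ≤ e (matInc b) →
    (∀ τ ∈ TS A, dRank (matTr τ e) (e (matInc a)) < dRank (matTr τ e) (e (matInc b))) →
    CuntzBelow (e (matInc a)) (e (matInc b))

/-- The extreme boundary `∂_e T(A)` of the tracial state space. -/
def extTS (A : Type u) [CStarAlgebra A] : Set (WeakDual ℂ A) :=
  Set.extremePoints ℝ (TS A)

/-- A C*-algebra is simple if its only closed two-sided ideals are `0` and the whole algebra. -/
def IsSimpleCStar (A : Type u) [CStarAlgebra A] : Prop :=
  ∀ I : TwoSidedIdeal A, IsClosed (I : Set A) → (I : Set A) = {0} ∨ (I : Set A) = Set.univ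

/-- `F_σ` subsets: countable unions of closed sets. -/
def IsFSigmaIn {E : Type v} [TopologicalSpace E] (X : Set E) : Prop :=
  ∃ C : ℕ → Set E, (∀ n, IsClosed (C n)) ∧ X = ⋃ n, C n

/-- Covering dimension at most `m`: every finite open cover admits a finite open refinement
in which every point lies in at most `m + 1` members. -/
def CovDimLE (X : Type v) [TopologicalSpace X] (m : ℕ) : Prop :=
  ∀ (n : ℕ) (U : Fin n → Set X), (∀ i, IsOpen (U i)) → (⋃ i, U i) = univ →
    ∃ (p : ℕ) (V : Fin p → Set X), (∀ j, IsOpen (V j)) ∧ (⋃ j, V j) = univ ∧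
      (∀ j, ∃ i, V j ⊆ U i) ∧ ∀ x : X, {j | x ∈ V j}.ncard ≤ m + 1

/-- Zero-dimensionality: the topology has a basis of clopen sets. -/
def ZeroDim (X : Type v) [TopologicalSpace X] : Prop :=
  ∀ (x : X) (U : Set X), IsOpen U → x ∈ U → ∃ V : Set X, IsClopen V ∧ x ∈ V ∧ V ⊆ U

/-- Real-valued functions that are affine on `T(A)`. -/
def AffineOnTS {A : Type u} [CStarAlgebra A] (f : WeakDual ℂ A → ℝ) : Prop :=
  ∀ σ ∈ TS A, ∀ σ' ∈ TS A, ∀ t : ℝ, 0 ≤ t → t ≤ 1 →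
    f (t • σ + (1 - t) • σ') = t * f σ + (1 - t) * f σ'

/-- A Borel measure `μ` represents `τ` if `f τ = ∫ f dμ` for every weak-* continuous
affine real-valued function `f` on `T(A)`. -/
def Represents {A : Type u} [CStarAlgebra A] [MeasurableSpace (WeakDual ℂ A)]
    (μ : Measure (WeakDual ℂ A)) (τ : WeakDual ℂ A) : Prop :=
  ∀ f : WeakDual ℂ A → ℝ, ContinuousOn f (TS A) → AffineOnTS f → f τ = ∫ σ, f σ ∂μ

/-- A metric space structure is compatible if it induces the given topology. -/
def CompatibleMetric (X : Type v) [t : TopologicalSpace X] (m : MetricSpace X) : Prop :=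
  m.toUniformSpace.toTopologicalSpace = t

/-- Positivity of a matrix over a star ring: `M = Nᴴ * N` for some `N`. -/
def MatPos {R : Type v} [Ring R] [StarRing R] {n : ℕ} (M : Matrix (Fin n) (Fin n) R) : Prop :=
  ∃ N : Matrix (Fin n) (Fin n) R, M = N.conjTranspose * N

/-- Completely positive `ℂ`-linear maps: all matrix amplifications preserve positivity. -/
def IsCP {R : Type u} {S : Type v} [Ring R] [StarRing R] [Algebra ℂ R]
    [Ring S] [StarRing S] [Algebra ℂ S] (φ : R →ₗ[ℂ] S) : Prop :=
  ∀ (n : ℕ) (M : Matrix (Fin n) (Fin n) R), MatPos M → MatPos (M.map ⇑φ)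

/-- Completely positive contractive (cpc) maps. -/
def IsCPC {R : Type u} {S : Type v} [NormedRing R] [StarRing R] [NormedAlgebra ℂ R]
    [NormedRing S] [StarRing S] [NormedAlgebra ℂ S] (φ : R →ₗ[ℂ] S) : Prop :=
  IsCP φ ∧ ∀ x : R, ‖φ x‖ ≤ ‖x‖

/-- cpc order zero maps from `M_k(ℂ)` (with the operator norm) into `S`:
cpc maps preserving orthogonality of positive elements. -/
def IsCPCOrderZero {S : Type v} [NormedRing S] [StarRing S] [NormedAlgebra ℂ S] {k : ℕ}
    (φ : Matrix (Fin k) (Fin k) ℂ →ₗ[ℂ] S) : Prop :=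
  IsCPC φ ∧ ∀ x y : Matrix (Fin k) (Fin k) ℂ, x.PosSemidef → y.PosSemidef → x * y = 0 →
    φ x * φ y = 0

/-- Nuclearity, via the completely positive approximation property. -/
def IsNuclear (A : Type u) [CStarAlgebra A] : Prop :=
  ∀ (G : Finset A) (ε : ℝ), 0 < ε →
    ∃ (n : ℕ) (ψ : A →ₗ[ℂ] Matrix (Fin n) (Fin n) ℂ) (φ : Matrix (Fin n) (Fin n) ℂ →ₗ[ℂ] A),
      IsCPC ψ ∧ IsCPC φ ∧ ∀ a ∈ G, ‖φ (ψ a) - a‖ < ε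

/-!
Tracial states have norm at most `4`, so `Y` is weak-* compact. The functions
`τ ↦ τ(f_{1/n}(a))` are continuous and increase to `d_τ(a) > β - α`, so by compactness a single
`N` has `τ(f_{1/(N+1)}(a)) > β - α` on all of `Y`. Take `η = 1/(2N+2)`. Functional calculus gives
`f_{1/n}(1 - f_η(a)) ≤ 1 - 2 f_{2η}(a) + f_η(a)` for every `n` and
`f_{1/2}(1 - f_η(a)) ≥ 1 - f_{η/2}(a)`; since `f_η` and `f_{η/2}` are terms of the supremum
defining `d_τ(a) ≤ β`, tracing these inequalities gives both bounds.
-/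

section PositiveFunctionals

variable {B : Type v} [CStarAlgebra B] [PartialOrder B] [StarOrderedRing B]

lemma map_nonneg_of_forall_star_mul_self_nonneg (φ : B →ₗ[ℂ] ℂ)
    (hφ : ∀ c, 0 ≤ φ (star c * c)) {b : B} (hb : 0 ≤ b) : 0 ≤ φ b := by
  simpa [(CFC.sqrt_nonneg b).isSelfAdjoint.star_eq, CFC.sqrt_mul_sqrt_self b hb]
    using hφ (CFC.sqrt b)

def PositiveLinearMap.ofStarMulSelfNonneg (φ : B →ₗ[ℂ] ℂ) (hφ : ∀ c, 0 ≤ φ (star c * c)) :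
    B →ₚ[ℂ] ℂ :=
  .mk₀ φ fun _ => map_nonneg_of_forall_star_mul_self_nonneg φ hφ

end PositiveFunctionals

section TracialStates

variable {A : Type u} [CStarAlgebra A]

lemma IsTracialState.norm_apply_le {τ : WeakDual ℂ A} (hτ : IsTracialState A τ) (x : A) :
    ‖τ x‖ ≤ 4 * ‖x‖ := by
  let _ := CStarAlgebra.spectralOrder A
  have _ := CStarAlgebra.spectralOrderedRing A
  have h_nonneg (y : A) (hy : 0 ≤ y) : ‖τ y‖ ≤ ‖y‖ := by
    have h : ‖τ y‖ ≤ ‖τ 1‖ * ‖y‖ :=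
      (PositiveLinearMap.ofStarMulSelfNonneg τ.toLinearMap hτ.2.1).norm_apply_le_of_nonneg y hy
    simpa [hτ.1] using h
  obtain ⟨y, hy_nonneg, hy_norm, hxy⟩ := CStarAlgebra.exists_sum_four_nonneg x
  calc ‖τ x‖ = ‖∑ i : Fin 4, Complex.I ^ (i : ℕ) * τ (y i)‖ := by simp [hxy]
    _ ≤ ∑ i : Fin 4, ‖τ (y i)‖ := (norm_sum_le _ _).trans_eq (by simp)
    _ ≤ ∑ _i : Fin 4, ‖x‖ :=
      Finset.sum_le_sum fun i _ => (h_nonneg _ (hy_nonneg i)).trans (hy_norm i)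
    _ = 4 * ‖x‖ := by simp

lemma isBounded_TS : Bornology.IsBounded (TS A) :=
  (Metric.isBounded_closedBall (x := (0 : StrongDual ℂ A)) (r := 4)).subset fun τ hτ =>
    mem_closedBall_zero_iff.mpr <|
      ContinuousLinearMap.opNorm_le_bound _ (by norm_num) hτ.norm_apply_le

variable {k : ℕ} {B : Type v} [CStarAlgebra B]

lemma continuous_matTr_apply (e : Mat k A ≃⋆ₐ[ℂ] B) (b : B) :
    Continuous fun τ : WeakDual ℂ A => matTr τ e b :=
  continuous_finsetSum _ fun _ _ => WeakDual.eval_continuous _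

lemma IsTracialState.matTr_one {τ : WeakDual ℂ A} (hτ : IsTracialState A τ)
    (e : Mat k A ≃⋆ₐ[ℂ] B) : matTr τ e 1 = k := by
  simp [matTr, hτ.1]

lemma IsTracialState.matTr_star_mul_self_nonneg {τ : WeakDual ℂ A} (hτ : IsTracialState A τ)
    (e : Mat k A ≃⋆ₐ[ℂ] B) (c : B) : 0 ≤ matTr τ e (star c * c) := by
  simp only [matTr, map_mul, map_star, Matrix.mul_apply, Matrix.star_apply, map_sum]
  exact Finset.sum_nonneg fun _ _ => Finset.sum_nonneg fun _ _ => hτ.2.1 _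

def IsTracialState.matTrPositive [PartialOrder B] [StarOrderedRing B] {τ : WeakDual ℂ A}
    (hτ : IsTracialState A τ) (e : Mat k A ≃⋆ₐ[ℂ] B) : B →ₚ[ℂ] ℂ :=
  .ofStarMulSelfNonneg
    { toFun := matTr τ e
      map_add' := by simp [matTr, Finset.sum_add_distrib]
      map_smul' := by simp [matTr, Finset.mul_sum] }
    (hτ.matTr_star_mul_self_nonneg e ·)

end TracialStates

lemma min_mul_one_sub_min_div_le (m t : ℝ) {η : ℝ} (hη : 0 < η) :
    min (m * (1 - min (t / η) 1)) 1 ≤ 1 - 2 * min (t / (2 * η)) 1 + min (t / η) 1 := by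
  rcases le_or_gt η t with h | h
  · have h1 : min (t / η) 1 = 1 := min_eq_right ((one_le_div hη).mpr h)
    have h2 : min (t / (2 * η)) 1 ≤ 1 := min_le_right _ _
    rw [h1, sub_self, mul_zero, min_eq_left zero_le_one]
    linarith
  · have h1 : min (t / η) 1 = t / η := min_eq_left ((div_le_one hη).mpr h.le)
    have h2 : min (t / (2 * η)) 1 = t / (2 * η) :=
      min_eq_left ((div_le_one (by positivity)).mpr (by linarith))
    have h3 : min (m * (1 - t / η)) 1 ≤ 1 := min_le_right _ _
    have h4 : 1 - 2 * (t / (2 * η)) + t / η = 1 := by field_simp; ring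
    rw [h1, h2, h4]
    exact h3

lemma one_sub_min_div_half_le {t η : ℝ} (ht : 0 ≤ t) (hη : 0 < η) :
    1 - min (t / (η / 2)) 1 ≤ min (2 * (1 - min (t / η) 1)) 1 := by
  have h0 : 0 ≤ min (2 * (1 - min (t / η) 1)) 1 :=
    le_min (by linarith [min_le_right (t / η) 1]) zero_le_one
  rcases le_or_gt (η / 2) t with h | h
  · rw [min_eq_right ((one_le_div (by positivity)).mpr h), sub_self]
    exact h0
  · have h1 : t / η ≤ 1 / 2 := by rw [div_le_iff₀ hη]; linarith
    have h2 : 0 ≤ min (t / (η / 2)) 1 := le_min (div_nonneg ht (by positivity)) zero_le_one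
    rw [min_eq_left (h1.trans (by norm_num)),
      min_eq_right (show (1 : ℝ) ≤ 2 * (1 - t / η) by linarith)]
    linarith

section DRank

variable {B : Type v} [CStarAlgebra B]

lemma fEtaCFC_inv_natCast_add_one (n : ℕ) (a : B) :
    fEtaCFC ((n : ℝ) + 1)⁻¹ a = cfc (fun t : ℝ => min (((n : ℝ) + 1) * t) 1) a := by
  simp only [fEtaCFC, div_inv_eq_mul, mul_comm]

lemma one_sub_fEtaCFC (η : ℝ) {a : B} (ha : IsSelfAdjoint a) :
    1 - fEtaCFC η a = cfc (fun t : ℝ => 1 - min (t / η) 1) a := by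
  rw [fEtaCFC, cfc_sub .., cfc_const_one ℝ a]

variable [PartialOrder B] [StarOrderedRing B] (φ : B →ₚ[ℂ] ℂ)

lemma bddAbove_range_re_apply_cfc (b : B) :
    BddAbove (range fun n : ℕ => (φ (cfc (fun t : ℝ => min (((n : ℝ) + 1) * t) 1) b)).re) := by
  refine ⟨(φ 1).re, ?_⟩
  rintro _ ⟨n, rfl⟩
  exact Complex.re_le_re <| φ.monotone' (cfc_le_one _ b fun _ _ => min_le_right _ _)

lemma re_apply_cfc_le_dRank (b : B) (n : ℕ) :
    (φ (cfc (fun t : ℝ => min (((n : ℝ) + 1) * t) 1) b)).re ≤ dRank φ b :=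
  le_ciSup (bddAbove_range_re_apply_cfc φ b) n

lemma re_apply_fEtaCFC_le_dRank (a : B) (n : ℕ) :
    (φ (fEtaCFC ((n : ℝ) + 1)⁻¹ a)).re ≤ dRank φ a := by
  rw [fEtaCFC_inv_natCast_add_one]
  exact re_apply_cfc_le_dRank φ a n

variable {a : B}

lemma re_apply_fEtaCFC_le_of_le (ha : 0 ≤ a) {η η' : ℝ} (hη : 0 < η) (hηη' : η ≤ η') :
    (φ (fEtaCFC η' a)).re ≤ (φ (fEtaCFC η a)).re :=
  Complex.re_le_re <| φ.monotone' <| cfc_mono fun _ ht =>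
    min_le_min_right 1 (div_le_div_of_nonneg_left (spectrum_nonneg_of_nonneg ha ht) hη hηη')

variable {η : ℝ}

/- `2 f_{2η} - f_η` vanishes on `(-∞, η)` and is at most `1`, so it lies below the indicator of
`[η, ∞)`, which is the complement of the support of `1 - f_η`. -/
lemma dRank_one_sub_fEtaCFC_le (ha : IsSelfAdjoint a) (hη : 0 < η) :
    dRank φ (1 - fEtaCFC η a)
      ≤ (φ 1).re - 2 * (φ (fEtaCFC (2 * η) a)).re + (φ (fEtaCFC η a)).re := by
  have h_bound : cfc (fun t : ℝ => 1 - 2 * min (t / (2 * η)) 1 + min (t / η) 1) a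
      = 1 - (2 : ℝ) • fEtaCFC (2 * η) a + fEtaCFC η a := by
    rw [cfc_add .., cfc_sub .., cfc_const_one ℝ a, cfc_const_mul ..]
    rfl
  refine ciSup_le fun n => ?_
  rw [one_sub_fEtaCFC η ha, ← cfc_comp' ..]
  calc _ ≤ (φ (cfc (fun t : ℝ => 1 - 2 * min (t / (2 * η)) 1 + min (t / η) 1) a)).re :=
        Complex.re_le_re <| φ.monotone' <| cfc_mono fun t _ =>
          min_mul_one_sub_min_div_le _ t hη
    _ = _ := by simp [h_bound, map_sub, map_add]

lemma le_dRank_one_sub_fEtaCFC (ha : 0 ≤ a) (hη : 0 < η) :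
    (φ 1).re - (φ (fEtaCFC (η / 2) a)).re ≤ dRank φ (1 - fEtaCFC η a) := by
  refine le_trans ?_ (re_apply_cfc_le_dRank φ _ 1)
  rw [one_sub_fEtaCFC η ha.isSelfAdjoint, ← cfc_comp' ..]
  calc (φ 1).re - (φ (fEtaCFC (η / 2) a)).re
      = (φ (cfc (fun t : ℝ => 1 - min (t / (η / 2)) 1) a)).re := by
        simp [← one_sub_fEtaCFC _ ha.isSelfAdjoint]
    _ ≤ _ := Complex.re_le_re <| φ.monotone' <| cfc_mono fun t ht => by
        simpa [one_add_one_eq_two] using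
          one_sub_min_div_half_le (spectrum_nonneg_of_nonneg ha ht) hη

end DRank

lemma IsCompact.exists_forall_lt_of_lt_iSup {X : Type*} [TopologicalSpace X] {K : Set X}
    (hK : IsCompact K) {f : ℕ → X → ℝ} (hf : ∀ n, Continuous (f n))
    (hmono : ∀ x ∈ K, Monotone fun n => f n x) {r : ℝ} (hr : ∀ x ∈ K, r < ⨆ n, f n x) :
    ∃ N, ∀ x ∈ K, r < f N x := by
  obtain ⟨s, hs⟩ := hK.elim_finite_subcover (fun n => f n ⁻¹' Ioi r)
    (fun n => isOpen_Ioi.preimage (hf n))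
    fun x hx => mem_iUnion.mpr (exists_lt_of_lt_ciSup (hr x hx))
  refine ⟨s.sup id, fun x hx => ?_⟩
  obtain ⟨n, hn, hxn⟩ := mem_iUnion₂.mp (hs hx)
  exact lt_of_lt_of_le hxn (hmono x hx (s.le_sup (f := id) hn))

theorem stmt_1_general {A : Type u} [CStarAlgebra A]
    {Y : Set (WeakDual ℂ A)} (hYT : Y ⊆ TS A) (hYc : IsClosed Y)
    {k : ℕ} {B : Type v} [CStarAlgebra B] [PartialOrder B] [StarOrderedRing B]
    (e : Mat k A ≃⋆ₐ[ℂ] B) (a : B) (ha : 0 ≤ a)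
    {α β : ℝ}
    (hd : ∀ τ ∈ Y, β - α < dRank (matTr τ e) a ∧ dRank (matTr τ e) a ≤ β) :
    ∃ η : ℝ, 0 < η ∧ ∀ τ ∈ Y,
      (k : ℝ) - β ≤ dRank (matTr τ e) (1 - fEtaCFC η a) ∧
      dRank (matTr τ e) (1 - fEtaCFC η a) < (k : ℝ) - β + 2 * α := by
  have hY : IsCompact Y :=
    WeakDual.isCompact_of_bounded_of_closed (isBounded_TS.subset hYT) hYc
  obtain ⟨N, hN⟩ := hY.exists_forall_lt_of_lt_iSup
    (f := fun n τ => (matTr τ e (cfc (fun t : ℝ => min (((n : ℝ) + 1) * t) 1) a)).re)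
    (fun n => Complex.continuous_re.comp (continuous_matTr_apply e _))
    (fun τ hτ n m hnm => by
      simp only [← fEtaCFC_inv_natCast_add_one]
      exact re_apply_fEtaCFC_le_of_le ((hYT hτ).matTrPositive e) ha (by positivity) (by gcongr))
    (fun τ hτ => (hd τ hτ).1)
  set η : ℝ := (((2 * N + 1 : ℕ) : ℝ) + 1)⁻¹ with hη
  have h2η : 2 * η = ((N : ℝ) + 1)⁻¹ := by rw [hη]; push_cast; field_simp; ring
  have hη2 : η / 2 = (((4 * N + 3 : ℕ) : ℝ) + 1)⁻¹ := by rw [hη]; push_cast; field_simp; ring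
  refine ⟨η, by positivity, fun τ hτ => ?_⟩
  set φ := (hYT hτ).matTrPositive e
  have hφ1 : (φ 1).re = k := by rw [show φ 1 = k from (hYT hτ).matTr_one e, Complex.natCast_re]
  have h_2η : β - α < (φ (fEtaCFC (2 * η) a)).re := by
    rw [h2η, fEtaCFC_inv_natCast_add_one]
    exact hN τ hτ
  have h_η : (φ (fEtaCFC η a)).re ≤ β := (re_apply_fEtaCFC_le_dRank φ a _).trans (hd τ hτ).2
  have h_η2 : (φ (fEtaCFC (η / 2) a)).re ≤ β := by
    rw [hη2]
    exact (re_apply_fEtaCFC_le_dRank φ a _).trans (hd τ hτ).2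
  have h_lower := le_dRank_one_sub_fEtaCFC φ ha (η := η) (by positivity)
  have h_upper := dRank_one_sub_fEtaCFC_le φ ha.isSelfAdjoint (η := η) (by positivity)
  change (k : ℝ) - β ≤ dRank φ (1 - fEtaCFC η a) ∧ dRank φ (1 - fEtaCFC η a) < k - β + 2 * α
  constructor <;> linarith

theorem stmt_1 {A : Type u} [CStarAlgebra A] [TopologicalSpace.SeparableSpace A]
    (hTA : (TS A).Nonempty)
    {Y : Set (WeakDual ℂ A)} (hYT : Y ⊆ TS A) (hYc : IsClosed Y)
    {k : ℕ} {B : Type v} [CStarAlgebra B] [PartialOrder B] [StarOrderedRing B]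
    (e : Mat k A ≃⋆ₐ[ℂ] B) (a : B) (ha : 0 ≤ a)
    {α β : ℝ} (hα : 0 < α) (hαβ : α < β)
    (hd : ∀ τ ∈ Y, β - α < dRank (matTr τ e) a ∧ dRank (matTr τ e) a ≤ β) :
    ∃ η : ℝ, 0 < η ∧ ∀ τ ∈ Y,
      (k : ℝ) - β ≤ dRank (matTr τ e) (1 - fEtaCFC η a) ∧
      dRank (matTr τ e) (1 - fEtaCFC η a) < (k : ℝ) - β + 2 * α :=
  stmt_1_general hYT hYc e a ha hd

end
end

section
/- Let A be a separable unital simple infinite-dimensional C*-algebra such that X = ∂_e T(A) is nonempty and F_σ, and write ∂X = X̄ \ X. Suppose each τ ∈ ∂X has a representing Borel probability measure μ_τ on X, and suppose there exist a compact subset F ⊂ X and a real number 0 < ε < 1 such that μ_τ(F) > ε for all τ ∈ ∂X. Then ∂X ∪ F is a compact subset of T(A). -/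
open Filter Set Topology MeasureTheory
open scoped ComplexOrder Matrix.Norms.L2Operator

noncomputable section

universe u v

/-!
Since `∂X ∪ F` lies in the compact set `X̄`, it suffices to show that it is closed, i.e. that
every extreme point `τ` in the closure of `∂X` lies in `F`. Otherwise Milman's converse of the
Krein–Milman theorem puts `τ` outside the closed convex hull `C` of `F`, and since `τ` is extreme
it also lies outside the compact convex set `ε C + (1 - ε) T(A)`. Hahn–Banach separation then
yields a continuous affine `f` with `f ≥ 0` on `T(A)`, `f τ < 1` and `f > 1 / ε` on `F`. Some
`τ' ∈ ∂X` near `τ` still has `f τ' < 1`, whereas `f τ' = ∫ f dμ_τ' ≥ μ_τ'(F) / ε > 1`.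
-/

open scoped Pointwise

section ConvexCompact

variable {E : Type*} [AddCommGroup E] [Module ℝ E]

theorem Convex.convexHull_union_eq_union_convexJoin {s t : Set E} (hs : Convex ℝ s)
    (ht : Convex ℝ t) : convexHull ℝ (s ∪ t) = s ∪ t ∪ convexJoin ℝ s t := by
  refine subset_antisymm ?_
    (union_subset (subset_convexHull ℝ _) (convexJoin_subset_convexHull s t))
  rcases s.eq_empty_or_nonempty with rfl | hs₀
  · simp [ht.convexHull_eq]
  rcases t.eq_empty_or_nonempty with rfl | ht₀
  · simp [hs.convexHull_eq]
  rw [hs.convexHull_union ht hs₀ ht₀]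
  exact subset_union_right

variable [TopologicalSpace E] [IsTopologicalAddGroup E] [ContinuousSMul ℝ E]

theorem IsCompact.convexJoin {s t : Set E} (hs : IsCompact s) (ht : IsCompact t) :
    IsCompact (_root_.convexJoin ℝ s t) := by
  have : _root_.convexJoin ℝ s t =
      (fun p : ℝ × E × E => (1 - p.1) • p.2.1 + p.1 • p.2.2) '' (Icc 0 1 ×ˢ s ×ˢ t) := by
    ext x
    simp only [mem_convexJoin, segment_eq_image, mem_image, mem_prod, Prod.exists]
    constructor
    · rintro ⟨a, ha, b, hb, θ, hθ, rfl⟩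
      exact ⟨θ, a, b, ⟨hθ, ha, hb⟩, rfl⟩
    · rintro ⟨θ, a, b, ⟨hθ, ha, hb⟩, rfl⟩
      exact ⟨a, ha, b, hb, θ, hθ, rfl⟩
  rw [this]
  exact (isCompact_Icc.prod (hs.prod ht)).image (by fun_prop)

theorem isCompact_convexHull_biUnion {ι : Type*} {K : ι → Set E} (T : Finset ι)
    (hconv : ∀ i ∈ T, Convex ℝ (K i)) (hcomp : ∀ i ∈ T, IsCompact (K i)) :
    IsCompact (convexHull ℝ (⋃ i ∈ T, K i)) := by
  classical
  induction T using Finset.induction_on with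
  | empty => simp
  | insert i T _ ih =>
    simp only [Finset.forall_mem_insert] at hconv hcomp
    have hD := ih hconv.2 hcomp.2
    rw [Finset.set_biUnion_insert, ← convexHull_convexHull_union_right,
      hconv.1.convexHull_union_eq_union_convexJoin (convex_convexHull ℝ _)]
    exact (hcomp.1.union hD).union (hcomp.1.convexJoin hD)

/-- Milman's converse of the Krein–Milman theorem. -/
theorem mem_of_mem_extremePoints_of_mem_closure_convexHull [LocallyConvexSpace ℝ E] [T2Space E]
    {K F : Set E} {x : E} (hKconv : Convex ℝ K) (hK : IsCompact K) (hFK : F ⊆ K)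
    (hF : IsCompact F) (hx : x ∈ K.extremePoints ℝ) (hxF : x ∈ closure (convexHull ℝ F)) :
    x ∈ F := by
  by_contra hxF'
  have hV : ∀ σ ∈ F, ∃ V ∈ 𝓝 σ, IsClosed V ∧ Convex ℝ V ∧ x ∉ V := by
    intro σ hσ
    obtain ⟨U, W, hU, hW, hUconv, -, hσU, hxW, hUW⟩ :=
      exists_open_convex_of_notMem (𝕜 := ℝ) (x := σ) (s := {x})
        (ne_of_mem_of_not_mem hσ hxF') (convex_singleton x) isClosed_singleton
    refine ⟨closure U, mem_of_superset (hU.mem_nhds hσU) subset_closure, isClosed_closure,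
      hUconv.closure, fun hxU => ?_⟩
    exact (hUW.closure_left hW).notMem_of_mem_left hxU (hxW rfl)
  choose! V hVnhds hVclosed hVconv hxV using hV
  obtain ⟨T, hTF, hFT⟩ := hF.elim_nhds_subcover V hVnhds
  set D := convexHull ℝ (⋃ σ ∈ T, K ∩ V σ)
  have hD : IsCompact D := isCompact_convexHull_biUnion T
    (fun σ hσ => hKconv.inter (hVconv σ (hTF σ hσ)))
    (fun σ hσ => hK.inter_right (hVclosed σ (hTF σ hσ)))
  have hFD : F ⊆ D := fun y hy => subset_convexHull ℝ _ <| by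
    obtain ⟨σ, hσT, hyσ⟩ := mem_iUnion₂.1 (hFT hy)
    exact mem_iUnion₂.2 ⟨σ, hσT, hFK hy, hyσ⟩
  have hxD : x ∈ D :=
    hD.isClosed.closure_subset_iff.2 (convexHull_min hFD (convex_convexHull ℝ _)) hxF
  have hDK : D ⊆ K := convexHull_min (iUnion₂_subset fun _ _ => inter_subset_left) hKconv
  obtain ⟨σ, hσT, -, hxσ⟩ := mem_iUnion₂.1 <| extremePoints_convexHull_subset <|
    inter_extremePoints_subset_extremePoints_of_subset hDK ⟨hxD, hx⟩
  exact hxV σ (hTF σ hσT) hxσ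

theorem exists_affine_separation_of_mem_extremePoints [LocallyConvexSpace ℝ E] [T2Space E]
    {K C : Set E} {x : E} {ε : ℝ} (hKconv : Convex ℝ K) (hK : IsCompact K)
    (hCconv : Convex ℝ C) (hC : IsCompact C) (hCK : C ⊆ K) (hx : x ∈ K.extremePoints ℝ)
    (hxC : x ∉ C) (hε0 : 0 < ε) (hε1 : ε < 1) :
    ∃ (L : StrongDual ℝ E) (c : ℝ),
      (∀ y ∈ K, 0 ≤ L y + c) ∧ L x + c < 1 ∧ ∀ y ∈ C, ε⁻¹ < L y + c := by
  have hxS : x ∉ ε • C + (1 - ε) • K := by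
    rintro ⟨_, ⟨a, ha, rfl⟩, _, ⟨b, hb, rfl⟩, hab⟩
    exact hxC (hx.2 (hCK ha) hb ⟨ε, 1 - ε, hε0, by linarith, by ring, hab⟩ ▸ ha)
  obtain ⟨L, u, hLx, hLS⟩ := geometric_hahn_banach_point_closed
    ((hCconv.smul ε).add (hKconv.smul _)) ((hC.smul ε).add (hK.smul _)).isClosed hxS
  obtain ⟨y₀, hy₀, hmin⟩ := hK.exists_isMinOn ⟨x, hx.1⟩ L.continuous.continuousOn
  have hd : 0 < u - L y₀ := sub_pos.2 ((hmin hx.1).trans_lt hLx)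
  refine ⟨(u - L y₀)⁻¹ • L, -((u - L y₀)⁻¹ * L y₀), ?_⟩
  have hf : ∀ y, ((u - L y₀)⁻¹ • L) y + -((u - L y₀)⁻¹ * L y₀) = (L y - L y₀) / (u - L y₀) :=
    fun y => by simp only [FunLike.coe_smul, Pi.smul_apply, smul_eq_mul]; ring
  simp only [hf]
  refine ⟨fun y hy => div_nonneg (sub_nonneg.2 (hmin hy)) hd.le,
    (div_lt_one hd).2 (by linarith), fun y hy => ?_⟩
  have := hLS _ (add_mem_add (smul_mem_smul_set hy) (smul_mem_smul_set hy₀))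
  simp only [map_add, map_smul, smul_eq_mul] at this
  rw [lt_div_iff₀ hd, inv_mul_lt_iff₀ hε0]
  linarith

end ConvexCompact

theorem MeasureTheory.mul_lt_integral_of_lt_measure {Ω : Type*} [MeasurableSpace Ω]
    {μ : Measure Ω} [IsFiniteMeasure μ] {f : Ω → ℝ} {F : Set Ω} {a c : ℝ} (hf : Integrable f μ)
    (hf0 : 0 ≤ᵐ[μ] f) (ha : 0 ≤ a) (hc : 0 < c) (hfF : ∀ y ∈ F, c ≤ f y)
    (hμF : ENNReal.ofReal a < μ F) : c * a < ∫ y, f y ∂μ :=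
  calc c * a < c * μ.real F :=
        mul_lt_mul_of_pos_left ((ENNReal.ofReal_lt_iff_lt_toReal ha (measure_ne_top _ _)).1 hμF) hc
    _ ≤ c * μ.real {y | c ≤ f y} := mul_le_mul_of_nonneg_left (measureReal_mono hfF) hc.le
    _ ≤ ∫ y, f y ∂μ := mul_meas_ge_le_integral_of_nonneg hf0 hf c

theorem Continuous.integrable_of_ae_mem_isCompact {X : Type*} [TopologicalSpace X]
    [MeasurableSpace X] [OpensMeasurableSpace X] {μ : Measure X} [IsFiniteMeasure μ]
    {f : X → ℝ} {K : Set X} (hf : Continuous f) (hK : IsCompact K) (hμK : ∀ᵐ y ∂μ, y ∈ K) :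
    Integrable f μ := by
  obtain ⟨M, hM⟩ := hK.exists_bound_of_continuousOn hf.continuousOn
  exact .of_bound hf.aestronglyMeasurable M (hμK.mono hM)

instance WeakDual.instLocallyConvexSpaceReal {𝕜 E : Type*} [RCLike 𝕜] [NormedAddCommGroup E]
    [NormedSpace 𝕜 E] : LocallyConvexSpace ℝ (WeakDual 𝕜 E) :=
  WeakBilin.locallyConvexSpace

section TracialStates

variable {A : Type u} [CStarAlgebra A]

theorem isClosed_TS : IsClosed (TS A) := by
  simp only [TS, IsTracialState, ofPred_and, ofPred_forall]
  exact (isClosed_eq (WeakDual.eval_continuous 1) continuous_const).inter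
    ((isClosed_iInter fun a => isClosed_le continuous_const (WeakDual.eval_continuous _)).inter
      (isClosed_iInter fun a => isClosed_iInter fun b =>
        isClosed_eq (WeakDual.eval_continuous _) (WeakDual.eval_continuous _)))

theorem convex_TS : Convex ℝ (TS A) := by
  rintro σ ⟨hσ1, hσpos, hσtr⟩ σ' ⟨hσ'1, hσ'pos, hσ'tr⟩ s t hs ht hst
  refine ⟨?_, fun a => ?_, fun a b => ?_⟩
  · change s • σ 1 + t • σ' 1 = 1
    simp [hσ1, hσ'1, ← Complex.ofReal_add, hst]
  · exact add_nonneg (smul_nonneg hs (hσpos a)) (smul_nonneg ht (hσ'pos a))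
  · change s • σ (a * b) + t • σ' (a * b) = s • σ (b * a) + t • σ' (b * a)
    rw [hσtr, hσ'tr]

theorem norm_apply_le_of_mem_TS {τ : WeakDual ℂ A} (hτ : τ ∈ TS A) (a : A) :
    ‖τ a‖ ≤ 4 * ‖a‖ := by
  let _ := CStarAlgebra.spectralOrder A
  let _ := CStarAlgebra.spectralOrderedRing A
  let f : A →ₚ[ℂ] ℂ := .mk₀ (τ : A →L[ℂ] ℂ) fun x hx => by
    obtain ⟨s, rfl⟩ := CStarAlgebra.nonneg_iff_eq_star_mul_self.1 hx
    exact hτ.2.1 s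
  have hpos : ∀ x : A, 0 ≤ x → ‖τ x‖ ≤ ‖x‖ := fun x hx => by
    have h := f.norm_apply_le_of_nonneg x hx
    rwa [show f 1 = 1 from hτ.1, norm_one, one_mul] at h
  obtain ⟨y, hy0, hy, ha⟩ := CStarAlgebra.exists_sum_four_nonneg a
  calc ‖τ a‖ = ‖∑ i : Fin 4, Complex.I ^ (i : ℕ) * τ (y i)‖ := by
        rw [ha, map_sum]; simp only [map_smul, smul_eq_mul]
    _ ≤ ∑ i, ‖τ (y i)‖ := (norm_sum_le _ _).trans (by simp)
    _ ≤ ∑ _ : Fin 4, ‖a‖ := Finset.sum_le_sum fun i _ => (hpos _ (hy0 i)).trans (hy i)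
    _ = 4 * ‖a‖ := by simp

theorem isCompact_TS : IsCompact (TS A) :=
  WeakDual.isCompact_of_bounded_of_closed
    ((Metric.isBounded_closedBall (x := (0 : StrongDual ℂ A)) (r := 4)).subset fun τ hτ =>
      mem_closedBall_zero_iff.2 <| ContinuousLinearMap.opNorm_le_bound _ (by norm_num)
        (norm_apply_le_of_mem_TS hτ))
    isClosed_TS

end TracialStates

section ExtremeBoundary

variable {E : Type*} [AddCommGroup E] [Module ℝ E] [TopologicalSpace E]
  [IsTopologicalAddGroup E] [ContinuousSMul ℝ E] [LocallyConvexSpace ℝ E] [T2Space E]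
  [MeasurableSpace E] [OpensMeasurableSpace E]

def RepresentsOnExtremePoints (K : Set E) (ν : Measure E) (τ : E) : Prop :=
  IsProbabilityMeasure ν ∧ ν (K.extremePoints ℝ)ᶜ = 0 ∧ ∀ L : StrongDual ℝ E, L τ = ∫ y, L y ∂ν

variable {K F : Set E} {μ : E → Measure E} {ε : ℝ}

theorem mem_of_mem_extremePoints_of_mem_closure_boundary (hKconv : Convex ℝ K)
    (hK : IsCompact K)
    (hμ : ∀ τ ∈ closure (K.extremePoints ℝ) \ K.extremePoints ℝ,
      RepresentsOnExtremePoints K (μ τ) τ)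
    (hFX : F ⊆ K.extremePoints ℝ) (hF : IsCompact F) (hε0 : 0 < ε) (hε1 : ε < 1)
    (hμF : ∀ τ ∈ closure (K.extremePoints ℝ) \ K.extremePoints ℝ, ENNReal.ofReal ε < μ τ F)
    {τ : E} (hτX : τ ∈ K.extremePoints ℝ)
    (hτ : τ ∈ closure (closure (K.extremePoints ℝ) \ K.extremePoints ℝ)) : τ ∈ F := by
  by_contra hτF
  have hFK : F ⊆ K := hFX.trans extremePoints_subset
  have hCK : closure (convexHull ℝ F) ⊆ K :=
    hK.isClosed.closure_subset_iff.2 (convexHull_min hFK hKconv)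
  obtain ⟨L, c, hf0, hfτ, hfF⟩ := exists_affine_separation_of_mem_extremePoints hKconv hK
    (convex_convexHull ℝ F).closure (hK.of_isClosed_subset isClosed_closure hCK) hCK hτX
    (fun h => hτF (mem_of_mem_extremePoints_of_mem_closure_convexHull hKconv hK hFK hF hτX h))
    hε0 hε1
  obtain ⟨τ', hfτ', hτ'⟩ := mem_closure_iff.1 hτ {y | L y + c < 1}
    (isOpen_lt (by fun_prop) continuous_const) hfτ
  obtain ⟨_, hnull, hbary⟩ := hμ τ' hτ'
  have hK_ae : ∀ᵐ y ∂μ τ', y ∈ K :=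
    measure_mono_null (compl_subset_compl.2 extremePoints_subset) hnull
  have hL : Integrable L (μ τ') := L.continuous.integrable_of_ae_mem_isCompact hK hK_ae
  have hbary' : L τ' + c = ∫ y, L y + c ∂μ τ' := by
    rw [integral_add hL (integrable_const c), ← hbary L]
    simp
  have hlarge : ε⁻¹ * ε < ∫ y, L y + c ∂μ τ' :=
    mul_lt_integral_of_lt_measure (hL.add (integrable_const c)) (hK_ae.mono hf0) hε0.le
      (inv_pos.2 hε0) (fun y hy => (hfF y (subset_closure (subset_convexHull ℝ F hy))).le)
      (hμF τ' hτ')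
  rw [inv_mul_cancel₀ hε0.ne', ← hbary'] at hlarge
  exact (show L τ' + c < 1 from hfτ').not_gt hlarge

theorem isCompact_closure_extremePoints_diff_union (hKconv : Convex ℝ K) (hK : IsCompact K)
    (hμ : ∀ τ ∈ closure (K.extremePoints ℝ) \ K.extremePoints ℝ,
      RepresentsOnExtremePoints K (μ τ) τ)
    (hFX : F ⊆ K.extremePoints ℝ) (hF : IsCompact F) (hε0 : 0 < ε) (hε1 : ε < 1)
    (hμF : ∀ τ ∈ closure (K.extremePoints ℝ) \ K.extremePoints ℝ, ENNReal.ofReal ε < μ τ F) :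
    IsCompact (closure (K.extremePoints ℝ) \ K.extremePoints ℝ ∪ F) := by
  have hXK : closure (K.extremePoints ℝ) ⊆ K :=
    hK.isClosed.closure_subset_iff.2 extremePoints_subset
  refine (hK.of_isClosed_subset isClosed_closure hXK).of_isClosed_subset ?_
    (union_subset sdiff_subset (hFX.trans subset_closure))
  refine isClosed_of_closure_subset fun τ hτ => ?_
  rw [closure_union, hF.isClosed.closure_eq] at hτ
  rcases hτ with hτ | hτF
  · by_cases hτX : τ ∈ K.extremePoints ℝ
    · exact Or.inr (mem_of_mem_extremePoints_of_mem_closure_boundary hKconv hK hμ hFX hF hε0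
        hε1 hμF hτX hτ)
    · exact Or.inl ⟨closure_minimal sdiff_subset isClosed_closure hτ, hτX⟩
  · exact Or.inr hτF

end ExtremeBoundary

theorem stmt_7_general {A : Type u} [CStarAlgebra A]
    [MeasurableSpace (WeakDual ℂ A)] [BorelSpace (WeakDual ℂ A)]
    (μ : WeakDual ℂ A → Measure (WeakDual ℂ A))
    (hμ : ∀ τ ∈ closure (extTS A) \ extTS A,
      IsProbabilityMeasure (μ τ) ∧ μ τ (extTS A)ᶜ = 0 ∧ Represents (μ τ) τ)
    {F : Set (WeakDual ℂ A)} (hFX : F ⊆ extTS A) (hF : IsCompact F)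
    {ε : ℝ} (hε0 : 0 < ε) (hε1 : ε < 1)
    (hμF : ∀ τ ∈ closure (extTS A) \ extTS A, ENNReal.ofReal ε < μ τ F) :
    IsCompact ((closure (extTS A) \ extTS A) ∪ F) := by
  refine isCompact_closure_extremePoints_diff_union (E := WeakDual ℂ A) convex_TS isCompact_TS
    (fun τ hτ => ?_) hFX hF hε0 hε1 hμF
  obtain ⟨hprob, hnull, hrep⟩ := hμ τ hτ
  exact ⟨hprob, hnull, fun L => hrep L L.continuous.continuousOn fun σ _ σ' _ t _ _ => by simp⟩

theorem stmt_7 {A : Type u} [CStarAlgebra A] [TopologicalSpace.SeparableSpace A]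
    [MeasurableSpace (WeakDual ℂ A)] [BorelSpace (WeakDual ℂ A)]
    (hsimple : IsSimpleCStar A) (hinf : ¬ FiniteDimensional ℂ A)
    (hXne : (extTS A).Nonempty) (hX : IsFSigmaIn (extTS A))
    (μ : WeakDual ℂ A → Measure (WeakDual ℂ A))
    (hμ : ∀ τ ∈ closure (extTS A) \ extTS A,
      IsProbabilityMeasure (μ τ) ∧ μ τ (extTS A)ᶜ = 0 ∧ Represents (μ τ) τ)
    {F : Set (WeakDual ℂ A)} (hFX : F ⊆ extTS A) (hF : IsCompact F)
    {ε : ℝ} (hε0 : 0 < ε) (hε1 : ε < 1)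
    (hμF : ∀ τ ∈ closure (extTS A) \ extTS A, ENNReal.ofReal ε < μ τ F) :
    IsCompact ((closure (extTS A) \ extTS A) ∪ F) :=
  stmt_7_general μ hμ hFX hF hε0 hε1 hμF

end
end
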